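/- Let Π be a family of deterministic stopping policies with VC dimension at most d (as Boolean classifiers on List O), d ≥ 1, let g : List O → ℝ be a reward function, and let x₁, …, xₙ be n fixed full trajectories of horizon H with n·H ≥ d. Define the empirical value estimate of a policy π as V̂_π = (1/n)·Σ_{i=1}^{n} R_π(xᵢ). Then the set of empirical value estimates { V̂_π : π ∈ Π } ⊆ ℝ has cardinality at most (e·n·H/d)^d. -/

import Mathlib

/-!
A policy enters the empirical value on the trajectories `x i` only through its values on the at most
`n * H` prefixes `trajPrefix (x i) t` with `1 ≤ t ≤ H`, since the stopping time reads nothing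
else. So the number of empirical values is at most the number of traces of `P` on that set of
prefixes, which the Sauer–Shelah lemma bounds by `∑ k ≤ d, (n * H).choose k`; weighting the
`k`-th term by `(d / (n * H)) ^ (k - d) ≥ 1` and using `1 + r ≤ exp r` bounds this sum by
`(e * n * H / d) ^ d`.
-/

open scoped BigOperators

/-- The `t`-prefix of a full trajectory `x : Fin H → O`, i.e. the list `[x 0, …, x (t-1)]`. -/
def trajPrefix {O : Type*} {H : ℕ} (x : Fin H → O) (t : ℕ) : List O :=
  (List.ofFn x).take t

open Classical in
/-- The stopping time of policy `π` on full trajectory `x`: the least `t` with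
`1 ≤ t ≤ H` such that `π` halts on the `t`-prefix of `x`, and `H` if no such `t` exists. -/
noncomputable def stopTime {O : Type*} (H : ℕ) (π : List O → Bool) (x : Fin H → O) : ℕ :=
  if h : ∃ t, (1 ≤ t ∧ t ≤ H) ∧ π (trajPrefix x t) = true then Nat.find h else H

/-- The return of policy `π` on full trajectory `x` under reward function `g`. -/
noncomputable def policyReturn {O : Type*} {H : ℕ} (g : List O → ℝ) (π : List O → Bool)
    (x : Fin H → O) : ℝ :=
  g (trajPrefix x (stopTime H π x))

/-- A family `Π` of policies shatters a finite set `S` of lists if every Boolean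
labeling of `S` is realized by some member of `Π`. -/
def ShattersLists {O : Type*} (P : Set (List O → Bool)) (S : Finset (List O)) : Prop :=
  ∀ f : List O → Bool, ∃ π ∈ P, ∀ l ∈ S, π l = f l

open Finset

lemma card_shatterer_le_sum_vcDim_of_subset {α : Type*} [DecidableEq α]
    {𝒜 : Finset (Finset α)} {T : Finset α} (h𝒜 : ∀ u ∈ 𝒜, u ⊆ T) :
    #𝒜.shatterer ≤ ∑ k ∈ Iic 𝒜.vcDim, (#T).choose k := by
  simp_rw [← card_powersetCard]
  refine (card_le_card fun s hs ↦ mem_biUnion.2 ⟨#s, ?_⟩).trans card_biUnion_le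
  obtain ⟨u, hu, hsu⟩ := (mem_shatterer.1 hs).exists_superset
  exact ⟨mem_Iic.2 (mem_shatterer.1 hs).card_le_vcDim,
    mem_powersetCard.2 ⟨hsu.trans (h𝒜 u hu), rfl⟩⟩

open Classical in
noncomputable def traceFamily {α : Type*} (P : Set (α → Bool)) (T : Finset α) :
    Finset (Finset α) :=
  T.powerset.filter fun u => ∃ π ∈ P, {a ∈ T | π a} = u

section traceFamily

variable {α : Type*} {P : Set (α → Bool)} {T s u : Finset α}

lemma mem_traceFamily : u ∈ traceFamily P T ↔ ∃ π ∈ P, {a ∈ T | π a} = u := by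
  simp only [traceFamily, mem_filter, mem_powerset, and_iff_right_iff_imp]
  rintro ⟨π, -, rfl⟩
  exact filter_subset _ _

lemma subset_of_mem_traceFamily (hu : u ∈ traceFamily P T) : u ⊆ T := by
  obtain ⟨π, -, rfl⟩ := mem_traceFamily.1 hu
  exact filter_subset _ _

lemma exists_restrict_eq_of_shatters [DecidableEq α] (hs : (traceFamily P T).Shatters s)
    (f : α → Bool) : ∃ π ∈ P, ∀ a ∈ s, π a = f a := by
  obtain ⟨u, hu, hsu⟩ := hs (filter_subset (fun a => f a) s)
  obtain ⟨π, hπ, rfl⟩ := mem_traceFamily.1 hu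
  obtain ⟨v, hv, hsv⟩ := hs.exists_superset
  have hsT : s ⊆ T := hsv.trans (subset_of_mem_traceFamily hv)
  refine ⟨π, hπ, fun a ha => Bool.eq_iff_iff.2 ?_⟩
  have := congrArg (a ∈ ·) hsu
  simp only [mem_inter, mem_filter, ha, hsT ha, true_and] at this
  exact Iff.of_eq this

lemma vcDim_traceFamily_le [DecidableEq α] {d : ℕ}
    (hP : ∀ S : Finset α, #S = d + 1 → ¬ ∀ f : α → Bool, ∃ π ∈ P, ∀ a ∈ S, π a = f a) :
    (traceFamily P T).vcDim ≤ d := by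
  refine Finset.sup_le fun s hs => ?_
  by_contra! hd
  obtain ⟨S, hSs, hS⟩ := exists_subset_card_eq hd
  exact hP S hS (exists_restrict_eq_of_shatters ((mem_shatterer.1 hs).mono_right hSs))

lemma card_traceFamily_le [DecidableEq α] {d : ℕ}
    (hP : ∀ S : Finset α, #S = d + 1 → ¬ ∀ f : α → Bool, ∃ π ∈ P, ∀ a ∈ S, π a = f a) :
    #(traceFamily P T) ≤ ∑ k ∈ Iic d, (#T).choose k :=
  calc #(traceFamily P T) ≤ #(traceFamily P T).shatterer := card_le_card_shatterer _
    _ ≤ ∑ k ∈ Iic (traceFamily P T).vcDim, (#T).choose k :=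
      card_shatterer_le_sum_vcDim_of_subset fun _ => subset_of_mem_traceFamily
    _ ≤ ∑ k ∈ Iic d, (#T).choose k :=
      sum_le_sum_of_subset (Iic_subset_Iic.2 (vcDim_traceFamily_le hP))

lemma ncard_image_le_card_traceFamily [DecidableEq α] {β : Type*} (F : (α → Bool) → β)
    (hF : ∀ π π', (∀ a ∈ T, π a = π' a) → F π = F π') :
    (F '' P).ncard ≤ #(traceFamily P T) := by
  set 𝒯 : Set (Finset α) := ↑(traceFamily P T)
  have hsub : F '' P ⊆ (fun u => F fun a => decide (a ∈ u)) '' 𝒯 := by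
    rintro _ ⟨π, hπ, rfl⟩
    refine ⟨{a ∈ T | π a}, mem_traceFamily.2 ⟨π, hπ, rfl⟩, hF _ _ fun a ha => ?_⟩
    simp [ha]
  calc (F '' P).ncard ≤ ((fun u => F fun a => decide (a ∈ u)) '' 𝒯).ncard :=
        Set.ncard_le_ncard hsub ((traceFamily P T).finite_toSet.image _)
    _ ≤ 𝒯.ncard := Set.ncard_image_le (traceFamily P T).finite_toSet
    _ = #(traceFamily P T) := Set.ncard_coe_finset _

end traceFamily

lemma sum_choose_le_exp_mul_div_pow {d m : ℕ} (hd : 1 ≤ d) (hdm : d ≤ m) :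
    ((∑ k ∈ Iic d, m.choose k : ℕ) : ℝ) ≤ (Real.exp 1 * m / d) ^ d := by
  have hm0 : (0 : ℝ) < m := by exact_mod_cast hd.trans hdm
  set r : ℝ := d / m with hr
  have hr0 : 0 < r := by positivity
  have hr1 : r ≤ 1 := (div_le_one hm0).2 (by exact_mod_cast hdm)
  have hweighted : ((∑ k ∈ Iic d, m.choose k : ℕ) : ℝ) * r ^ d ≤ Real.exp 1 ^ d :=
    calc ((∑ k ∈ Iic d, m.choose k : ℕ) : ℝ) * r ^ d
        ≤ ∑ k ∈ Iic d, (m.choose k : ℝ) * r ^ k := by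
          push_cast
          rw [sum_mul]
          exact sum_le_sum fun k hk => mul_le_mul_of_nonneg_left
            (pow_le_pow_of_le_one hr0.le hr1 (mem_Iic.1 hk)) (by positivity)
      _ ≤ ∑ k ∈ range (m + 1), (m.choose k : ℝ) * r ^ k :=
          sum_le_sum_of_subset_of_nonneg (fun k hk => mem_range.2 (by grind))
            fun _ _ _ => by positivity
      _ = (1 + r) ^ m := by
          rw [add_comm 1 r, add_pow]
          exact sum_congr rfl fun k _ => by ring
      _ ≤ Real.exp r ^ m := by gcongr; linarith [Real.add_one_le_exp r]
      _ = Real.exp 1 ^ d := by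
          rw [← Real.exp_nat_mul, ← Real.exp_nat_mul, hr]
          congr 1
          field_simp
  calc ((∑ k ∈ Iic d, m.choose k : ℕ) : ℝ) ≤ Real.exp 1 ^ d / r ^ d :=
        (le_div_iff₀ (by positivity)).2 hweighted
    _ = (Real.exp 1 * m / d) ^ d := by rw [hr, ← div_pow]; field_simp

section Trajectories

variable {O : Type*} {H n : ℕ}

lemma stopTime_congr {π π' : List O → Bool} {x : Fin H → O}
    (h : ∀ t, 1 ≤ t → t ≤ H → π (trajPrefix x t) = π' (trajPrefix x t)) :
    stopTime H π x = stopTime H π' x := by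
  have hiff : ∀ {t}, ((1 ≤ t ∧ t ≤ H) ∧ π (trajPrefix x t) = true) ↔
      ((1 ≤ t ∧ t ≤ H) ∧ π' (trajPrefix x t) = true) :=
    and_congr_right fun ht => by rw [h _ ht.1 ht.2]
  unfold stopTime
  by_cases hπ : ∃ t, (1 ≤ t ∧ t ≤ H) ∧ π (trajPrefix x t) = true
  · rw [dif_pos hπ, dif_pos (hπ.imp fun _ => hiff.1)]
    exact Nat.find_congr' hiff
  · rw [dif_neg hπ, dif_neg fun hπ' => hπ (hπ'.imp fun _ => hiff.2)]

lemma policyReturn_congr (g : List O → ℝ) {π π' : List O → Bool} {x : Fin H → O}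
    (h : ∀ t, 1 ≤ t → t ≤ H → π (trajPrefix x t) = π' (trajPrefix x t)) :
    policyReturn g π x = policyReturn g π' x := by
  rw [policyReturn, policyReturn, stopTime_congr h]

open Classical in
noncomputable def trajPrefixes (x : Fin n → Fin H → O) : Finset (List O) :=
  univ.image fun p : Fin n × Fin H => trajPrefix (x p.1) (p.2 + 1)

lemma trajPrefix_mem_trajPrefixes (x : Fin n → Fin H → O) (i : Fin n) {t : ℕ}
    (h1 : 1 ≤ t) (h2 : t ≤ H) : trajPrefix (x i) t ∈ trajPrefixes x := by
  classical
  refine mem_image.2 ⟨(i, ⟨t - 1, by omega⟩), mem_univ _, ?_⟩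
  simp only [Nat.sub_add_cancel h1]

lemma card_trajPrefixes_le (x : Fin n → Fin H → O) : #(trajPrefixes x) ≤ n * H := by
  classical
  exact card_image_le.trans_eq (by simp)

end Trajectories

theorem empirical_values_card_le_general {O : Type*} {H n d : ℕ} (hd : 1 ≤ d)
    (P : Set (List O → Bool))
    (hVC : ∀ S : Finset (List O), S.card = d + 1 → ¬ ShattersLists P S)
    (g : List O → ℝ)
    (x : Fin n → (Fin H → O)) (hnH : d ≤ n * H) :
    ((Set.ncard {v : ℝ | ∃ π ∈ P,
        v = (1 / (n : ℝ)) * ∑ i : Fin n, policyReturn g π (x i)} : ℝ))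
      ≤ (Real.exp 1 * n * H / d) ^ d := by
  classical
  set F : (List O → Bool) → ℝ :=
    fun π => (1 / (n : ℝ)) * ∑ i : Fin n, policyReturn g π (x i)
  have hF : ∀ π π', (∀ l ∈ trajPrefixes x, π l = π' l) → F π = F π' := fun π π' h => by
    simp only [F]
    congr 1
    exact sum_congr rfl fun i _ => policyReturn_congr g fun t h1 h2 =>
      h _ (trajPrefix_mem_trajPrefixes x i h1 h2)
  have hvalues : {v : ℝ | ∃ π ∈ P, v = F π} = F '' P := by
    ext v
    exact exists_congr fun _ => and_congr_right fun _ => eq_comm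
  have hcount : {v : ℝ | ∃ π ∈ P, v = F π}.ncard ≤ ∑ k ∈ Iic d, (n * H).choose k := by
    rw [hvalues]
    calc (F '' P).ncard ≤ #(traceFamily P (trajPrefixes x)) :=
          ncard_image_le_card_traceFamily F hF
      _ ≤ ∑ k ∈ Iic d, (#(trajPrefixes x)).choose k := card_traceFamily_le hVC
      _ ≤ ∑ k ∈ Iic d, (n * H).choose k :=
          sum_le_sum fun k _ => Nat.choose_le_choose k (card_trajPrefixes_le x)
  calc (({v : ℝ | ∃ π ∈ P, v = F π}.ncard : ℕ) : ℝ)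
      ≤ ((∑ k ∈ Iic d, (n * H).choose k : ℕ) : ℝ) := by exact_mod_cast hcount
    _ ≤ (Real.exp 1 * ↑(n * H) / d) ^ d := sum_choose_le_exp_mul_div_pow hd hnH
    _ = (Real.exp 1 * n * H / d) ^ d := by push_cast; ring

/-- The set of empirical value estimates `V̂_π = (1/n)·Σᵢ R_π(xᵢ)` over a VC-dimension-`d`
policy class has cardinality at most `(e·n·H/d)^d`. -/
theorem empirical_values_card_le {O : Type*} {H n d : ℕ} (hH : 1 ≤ H) (hd : 1 ≤ d)
    (P : Set (List O → Bool))
    (hVC : ∀ S : Finset (List O), S.card = d + 1 → ¬ ShattersLists P S)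
    (g : List O → ℝ)
    (x : Fin n → (Fin H → O)) (hnH : d ≤ n * H) :
    ((Set.ncard {v : ℝ | ∃ π ∈ P,
        v = (1 / (n : ℝ)) * ∑ i : Fin n, policyReturn g π (x i)} : ℝ))
      ≤ (Real.exp 1 * n * H / d) ^ d :=
  empirical_values_card_le_general hd P hVC g x hnH
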